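/- arXiv:1803.08593 — 2 statements merged into one kernel-verified Lean document; each statement's English description precedes it below -/
import Mathlib

section
/- Consider a backward random walk γ on the grid starting at x_n at time step l+1, moving by ω Δx with ω ∈ B at each backward time step Δt, with transition probabilities ρ^{k+1}_m(ω) = 1/(2d) − (λ/2)(ω·ξ^{k+1}_m), controlled by a field ξ with ‖ξ‖_∞ ≤ (dλ)^{-1}. Let η(γ) be the random curve with η^{l+1} = x_n and η^k(γ) = η^{k+1}(γ) − ξ^{k+1}_{m(γ^{k+1})} Δt. Define σ̃^k_i := E[|(η^k(γ) − γ^k)^i|²] and δ̃^k_i := E[|(η^k(γ) − γ^k)^i|]. Then for every control ξ and all 0 ≤ k ≤ l+1: (δ̃^k_i)² ≤ σ̃^k_i ≤ (t_{l+1} − t_k) · Δx/λ, where λ = Δt/Δx and t_k = kΔt. -/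
/-!
Write `(γ^k − η^k)^i = ∑_{j ≥ k} X_j` with `X_j = Δt (ξ^{j+1}_{m(γ^{j+1})})^i + Δx (ω^{j+1})^i`.
Given `γ^{j+1}`, the step `ω^{j+1}` has mean `−λ ξ^{j+1}_{m(γ^{j+1})}`, so `Δt = λ Δx` makes `X_j`
a martingale difference for the backward chain, with conditional second moment
`Δx²/d − (Δt ξ^i)² ≤ Δx²`. Conditioning on the first step of the walk and inducting on the number
of steps, the second moments add up: `σ̃^k_i ≤ (l + 1 − k) Δx² = (t_{l+1} − t_k) Δx/λ`.
The bound on `δ̃^k_i` is Jensen's inequality.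
-/

open scoped RealInnerProductSpace

namespace RandomWalkVariance

/-- The step vector `ω ∈ B = {±e₁,…,±e_d}`. -/
noncomputable def stepVec (d : ℕ) (z : Fin d × Bool) : EuclideanSpace ℝ (Fin d) :=
  (if z.2 then (1 : ℝ) else -1) • EuclideanSpace.single z.1 (1 : ℝ)

/-- Position `γ^k` of the backward walk started at `x_n` at time step `l+1`, determined by the
step sequence `s` (where `s j` is the step taken in the transition from time `j+1` to time `j`). -/
noncomputable def walk (d l : ℕ) (Δx : ℝ) (xn : EuclideanSpace ℝ (Fin d))
    (s : Fin (l + 1) → Fin d × Bool) (k : ℕ) : EuclideanSpace ℝ (Fin d) :=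
  xn + Δx • ∑ j : Fin (l + 1), if k ≤ (j : ℕ) then stepVec d (s j) else 0

/-- The curve `η(γ)`: `η^{l+1} = x_n`, `η^k = η^{k+1} − ξ^{k+1}_{m(γ^{k+1})} Δt`. -/
noncomputable def etaCurve (d l : ℕ) (Δx Δt : ℝ)
    (ξ : EuclideanSpace ℝ (Fin d) → ℕ → EuclideanSpace ℝ (Fin d))
    (xn : EuclideanSpace ℝ (Fin d)) (s : Fin (l + 1) → Fin d × Bool) (k : ℕ) :
    EuclideanSpace ℝ (Fin d) :=
  xn - Δt • ∑ j : Fin (l + 1),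
    if k ≤ (j : ℕ) then ξ (walk d l Δx xn s ((j : ℕ) + 1)) ((j : ℕ) + 1) else 0

/-- The probability of the path with step sequence `s`, the product of the transition
probabilities `ρ^{k+1}_m(ω) = 1/(2d) − (λ/2)(ω·ξ^{k+1}_m)` along the walk. -/
noncomputable def pathProb (d l : ℕ) (Δx lam : ℝ)
    (ξ : EuclideanSpace ℝ (Fin d) → ℕ → EuclideanSpace ℝ (Fin d))
    (xn : EuclideanSpace ℝ (Fin d)) (s : Fin (l + 1) → Fin d × Bool) : ℝ :=
  ∏ j : Fin (l + 1),
    (1 / (2 * d) - (lam / 2) * ⟪stepVec d (s j), ξ (walk d l Δx xn s ((j : ℕ) + 1)) ((j : ℕ) + 1)⟫)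

open Finset Function

lemma sq_sum_mul_le_sum_mul_sq {ι : Type*} (s : Finset ι) {p f : ι → ℝ}
    (hp : ∀ a ∈ s, 0 ≤ p a) (hsum : ∑ a ∈ s, p a = 1) :
    (∑ a ∈ s, p a * f a) ^ 2 ≤ ∑ a ∈ s, p a * f a ^ 2 := by
  simpa [hsum] using sum_sq_le_sum_mul_sum_of_sq_le_mul s hp
    (fun a ha => mul_nonneg (hp a ha) (sq_nonneg (f a))) fun a _ => le_of_eq (by ring)

lemma sum_mul_add_sq_le {ι : Type*} (s : Finset ι) {p x : ι → ℝ} {C : ℝ}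
    (hp : ∑ a ∈ s, p a = 1) (hmean : ∑ a ∈ s, p a * x a = 0)
    (hvar : ∑ a ∈ s, p a * x a ^ 2 ≤ C) (c : ℝ) :
    ∑ a ∈ s, p a * (c + x a) ^ 2 ≤ c ^ 2 + C := by
  have : ∑ a ∈ s, p a * (c + x a) ^ 2 =
      c ^ 2 * ∑ a ∈ s, p a + 2 * c * ∑ a ∈ s, p a * x a + ∑ a ∈ s, p a * x a ^ 2 := by
    simp only [mul_sum, ← sum_add_distrib]
    exact sum_congr rfl fun a _ => by ring
  rw [this, hp, hmean]
  linarith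

lemma sum_ite_le_val_eq_mul {l k : ℕ} (hk : k ≤ l + 1) (c : ℝ) :
    ∑ j : Fin (l + 1), (if k ≤ (j : ℕ) then c else 0) = ((l : ℝ) + 1 - k) * c := by
  rw [Fin.sum_univ_eq_sum_range (fun j => if k ≤ j then c else 0), sum_ite, sum_const_zero,
    add_zero, sum_const, nsmul_eq_mul, ← Nat.Ico_zero_eq_range,
    Ico_filter_le_of_left_le k.zero_le, Nat.card_Ico, Nat.cast_sub hk]
  push_cast
  ring

section BackwardKernel

variable {α : Type*} {n : ℕ}

def DependsOnTail (f : Fin n → (Fin n → α) → ℝ) : Prop :=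
  ∀ j s s', (∀ i, j ≤ i → s i = s' i) → f j s = f j s'

def pathWeight (ρ : Fin n → (Fin n → α) → ℝ) (s : Fin n → α) : ℝ :=
  ∏ j, ρ j s

/-- Conditions on the first step of the backward walk, i.e. on the last coordinate. -/
def fixLast (f : Fin (n + 1) → (Fin (n + 1) → α) → ℝ) (a : α) : Fin n → (Fin n → α) → ℝ :=
  fun j t => f j.castSucc (Fin.snoc t a)

lemma fixLast_update [DecidableEq α] (f : Fin (n + 1) → (Fin (n + 1) → α) → ℝ) (a : α)
    (j : Fin n) (t : Fin n → α) (z : α) :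
    fixLast f a j (update t j z) = f j.castSucc (update (Fin.snoc t a) j.castSucc z) := by
  rw [fixLast, Fin.snoc_update]

lemma DependsOnTail.fixLast {f : Fin (n + 1) → (Fin (n + 1) → α) → ℝ} (hf : DependsOnTail f)
    (a : α) : DependsOnTail (fixLast f a) := by
  refine fun j t t' h => hf _ _ _ fun i hi => ?_
  induction i using Fin.lastCases with
  | last => simp
  | cast i => simpa using h i (Fin.castSucc_le_castSucc_iff.mp hi)

lemma DependsOnTail.apply_last_snoc [DecidableEq α]
    {f : Fin (n + 1) → (Fin (n + 1) → α) → ℝ} (hf : DependsOnTail f) (s : Fin (n + 1) → α)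
    (t : Fin n → α) (a : α) :
    f (Fin.last n) (Fin.snoc t a) = f (Fin.last n) (update s (Fin.last n) a) :=
  hf _ _ _ fun i hi => by rw [Fin.last_le_iff.mp hi]; simp

lemma sum_pathWeight_mul [Fintype α] [DecidableEq α] {ρ : Fin (n + 1) → (Fin (n + 1) → α) → ℝ}
    (hρ : DependsOnTail ρ) (s₀ : Fin (n + 1) → α) (F : (Fin (n + 1) → α) → ℝ) :
    ∑ s, pathWeight ρ s * F s = ∑ a, ρ (Fin.last n) (update s₀ (Fin.last n) a) *
      ∑ t, pathWeight (fixLast ρ a) t * F (Fin.snoc t a) := by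
  rw [← (Fin.snocEquiv fun _ => α).sum_comp, Fintype.sum_prod_type]
  refine sum_congr rfl fun a _ => ?_
  rw [mul_sum]
  refine sum_congr rfl fun t _ => ?_
  change pathWeight ρ (Fin.snoc t a) * F (Fin.snoc t a) = _
  rw [pathWeight, Fin.prod_univ_castSucc, hρ.apply_last_snoc s₀]
  simp only [pathWeight, fixLast]
  ring

theorem sum_pathWeight [Fintype α] [DecidableEq α] [Nonempty α] {ρ : Fin n → (Fin n → α) → ℝ}
    (hρ : DependsOnTail ρ) (hsum : ∀ j s, ∑ z, ρ j (update s j z) = 1) :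
    ∑ s, pathWeight ρ s = 1 := by
  induction n with
  | zero => simp [pathWeight]
  | succ n ih =>
    let s₀ : Fin (n + 1) → α := fun _ => Classical.arbitrary α
    have hsum' (a : α) : ∑ t, pathWeight (fixLast ρ a) t = 1 :=
      ih (hρ.fixLast a) fun j t => by simpa only [fixLast_update] using hsum _ _
    simpa only [mul_one, hsum', hsum] using sum_pathWeight_mul hρ s₀ fun _ => 1

theorem sum_pathWeight_mul_sq_le [Fintype α] [DecidableEq α] [Nonempty α]
    {ρ X : Fin n → (Fin n → α) → ℝ} {C : Fin n → ℝ} (hρ : DependsOnTail ρ)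
    (hρ_nonneg : ∀ j s, 0 ≤ ρ j s) (hsum : ∀ j s, ∑ z, ρ j (update s j z) = 1)
    (hX : DependsOnTail X) (hmean : ∀ j s, ∑ z, ρ j (update s j z) * X j (update s j z) = 0)
    (hvar : ∀ j s, ∑ z, ρ j (update s j z) * X j (update s j z) ^ 2 ≤ C j) (c : ℝ) :
    ∑ s, pathWeight ρ s * (c + ∑ j, X j s) ^ 2 ≤ c ^ 2 + ∑ j, C j := by
  induction n generalizing c with
  | zero => simp [pathWeight]
  | succ n ih =>
    let s₀ : Fin (n + 1) → α := fun _ => Classical.arbitrary α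
    set p : α → ℝ := fun a => ρ (Fin.last n) (update s₀ (Fin.last n) a)
    set x : α → ℝ := fun a => X (Fin.last n) (update s₀ (Fin.last n) a)
    have ih' (a : α) (c' : ℝ) :
        ∑ t, pathWeight (fixLast ρ a) t * (c' + ∑ j, fixLast X a j t) ^ 2 ≤
          c' ^ 2 + ∑ j : Fin n, C j.castSucc :=
      ih (hρ.fixLast a) (fun _ _ => hρ_nonneg _ _)
        (fun j t => by simpa only [fixLast_update] using hsum _ _) (hX.fixLast a)
        (fun j t => by simpa only [fixLast_update] using hmean _ _)
        (fun j t => by simpa only [fixLast_update] using hvar _ _) c'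
    calc ∑ s, pathWeight ρ s * (c + ∑ j, X j s) ^ 2
        = ∑ a, p a *
            ∑ t, pathWeight (fixLast ρ a) t * ((c + x a) + ∑ j, fixLast X a j t) ^ 2 := by
          rw [sum_pathWeight_mul hρ s₀]
          refine sum_congr rfl fun a _ => congrArg _ (sum_congr rfl fun t _ => ?_)
          rw [Fin.sum_univ_castSucc, hX.apply_last_snoc s₀]
          simp only [fixLast, x]
          ring
      _ ≤ ∑ a, p a * ((c + x a) ^ 2 + ∑ j : Fin n, C j.castSucc) := by
          gcongr with a
          · exact hρ_nonneg _ _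
          · exact ih' a _
      _ = ∑ a, p a * (c + x a) ^ 2 + ∑ j : Fin n, C j.castSucc := by
          simp only [mul_add, sum_add_distrib, ← sum_mul, p, hsum, one_mul]
      _ ≤ c ^ 2 + C (Fin.last n) + ∑ j : Fin n, C j.castSucc := by
          gcongr
          exact sum_mul_add_sq_le _ (hsum _ _) (hmean _ _) (hvar _ _) c
      _ = c ^ 2 + ∑ j, C j := by rw [Fin.sum_univ_castSucc]; ring

end BackwardKernel

section StepDistribution

variable (d : ℕ)

noncomputable def stepProb (lam : ℝ) (v : EuclideanSpace ℝ (Fin d)) (z : Fin d × Bool) : ℝ :=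
  1 / (2 * d) - lam / 2 * ⟪stepVec d z, v⟫

lemma stepVec_apply (z : Fin d × Bool) (i : Fin d) :
    stepVec d z i = (if z.2 then 1 else -1) * if i = z.1 then 1 else 0 := by
  rw [stepVec, PiLp.smul_apply, smul_eq_mul, PiLp.single_apply]

lemma inner_stepVec (z : Fin d × Bool) (v : EuclideanSpace ℝ (Fin d)) :
    ⟪stepVec d z, v⟫ = (if z.2 then 1 else -1) * v z.1 := by
  rw [stepVec, real_inner_smul_left, EuclideanSpace.inner_single_left, map_one, one_mul]

variable {d}

lemma sum_stepProb_mul (lam : ℝ) (v : EuclideanSpace ℝ (Fin d)) (f : Fin d × Bool → ℝ) :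
    ∑ z, stepProb d lam v z * f z =
      ∑ a, (1 / (2 * d) * (f (a, true) + f (a, false)) -
        lam / 2 * v a * (f (a, true) - f (a, false))) := by
  rw [Fintype.sum_prod_type]
  refine sum_congr rfl fun a _ => ?_
  simp only [Fintype.sum_bool, stepProb, inner_stepVec, if_true, Bool.false_eq_true, if_false]
  ring

lemma sum_stepProb (hd : 0 < d) (lam : ℝ) (v : EuclideanSpace ℝ (Fin d)) :
    ∑ z, stepProb d lam v z = 1 := by
  have h := sum_stepProb_mul lam v fun _ => 1
  simp only [mul_one, sub_self, mul_zero, sub_zero, sum_const, card_univ, Fintype.card_fin,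
    nsmul_eq_mul] at h
  rw [h]
  field_simp
  ring

lemma sum_stepProb_mul_stepVec_apply (lam : ℝ) (v : EuclideanSpace ℝ (Fin d)) (i : Fin d) :
    ∑ z, stepProb d lam v z * stepVec d z i = -lam * v i := by
  rw [sum_stepProb_mul, sum_eq_single i (fun a _ ha => by simp [stepVec_apply, Ne.symm ha])
    (by simp)]
  simp only [stepVec_apply, if_true, Bool.false_eq_true, if_false]
  ring

lemma sum_stepProb_mul_stepVec_apply_sq (lam : ℝ) (v : EuclideanSpace ℝ (Fin d)) (i : Fin d) :
    ∑ z, stepProb d lam v z * stepVec d z i ^ 2 = 1 / d := by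
  rw [sum_stepProb_mul, sum_eq_single i (fun a _ ha => by simp [stepVec_apply, Ne.symm ha])
    (by simp)]
  simp only [stepVec_apply, if_true, Bool.false_eq_true, if_false]
  ring

lemma stepProb_nonneg {lam : ℝ} (hlam : 0 < lam) {v : EuclideanSpace ℝ (Fin d)}
    (hv : ∀ i, |v i| ≤ ((d : ℝ) * lam)⁻¹) (z : Fin d × Bool) : 0 ≤ stepProb d lam v z := by
  have hinner : ⟪stepVec d z, v⟫ ≤ ((d : ℝ) * lam)⁻¹ := by
    rw [inner_stepVec]
    refine (le_abs_self _).trans ?_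
    rcases z with ⟨a, _ | _⟩ <;> simpa using hv a
  have : lam / 2 * ((d : ℝ) * lam)⁻¹ = 1 / (2 * d) := by field_simp
  rw [stepProb, sub_nonneg, ← this]
  gcongr

lemma sum_stepProb_mul_increment (hd : 0 < d) (lam Δx : ℝ) (v : EuclideanSpace ℝ (Fin d))
    (i : Fin d) : ∑ z, stepProb d lam v z * (lam * Δx * v i + Δx * stepVec d z i) = 0 := by
  calc ∑ z, stepProb d lam v z * (lam * Δx * v i + Δx * stepVec d z i)
      = lam * Δx * v i * ∑ z, stepProb d lam v z +
          Δx * ∑ z, stepProb d lam v z * stepVec d z i := by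
        simp only [mul_sum, ← sum_add_distrib]
        exact sum_congr rfl fun z _ => by ring
    _ = 0 := by rw [sum_stepProb hd, sum_stepProb_mul_stepVec_apply]; ring

lemma sum_stepProb_mul_increment_sq_le (hd : 0 < d) (lam Δx : ℝ)
    (v : EuclideanSpace ℝ (Fin d)) (i : Fin d) :
    ∑ z, stepProb d lam v z * (lam * Δx * v i + Δx * stepVec d z i) ^ 2 ≤ Δx ^ 2 := by
  calc ∑ z, stepProb d lam v z * (lam * Δx * v i + Δx * stepVec d z i) ^ 2
      = (lam * Δx * v i) ^ 2 * ∑ z, stepProb d lam v z +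
          2 * (lam * Δx * v i) * Δx * ∑ z, stepProb d lam v z * stepVec d z i +
          Δx ^ 2 * ∑ z, stepProb d lam v z * stepVec d z i ^ 2 := by
        simp only [mul_sum, ← sum_add_distrib]
        exact sum_congr rfl fun z _ => by ring
    _ = Δx ^ 2 / d - (lam * Δx * v i) ^ 2 := by
        rw [sum_stepProb hd, sum_stepProb_mul_stepVec_apply, sum_stepProb_mul_stepVec_apply_sq]
        ring
    _ ≤ Δx ^ 2 := by
        have : Δx ^ 2 / d ≤ Δx ^ 2 := div_le_self (sq_nonneg Δx) (Nat.one_le_cast.mpr hd)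
        linarith [sq_nonneg (lam * Δx * v i)]

end StepDistribution

section Path

variable {d l : ℕ} {Δx : ℝ} {xn : EuclideanSpace ℝ (Fin d)}
  {ξ : EuclideanSpace ℝ (Fin d) → ℕ → EuclideanSpace ℝ (Fin d)}

lemma walk_congr {s s' : Fin (l + 1) → Fin d × Bool} {k : ℕ}
    (h : ∀ i : Fin (l + 1), k ≤ (i : ℕ) → s i = s' i) :
    walk d l Δx xn s k = walk d l Δx xn s' k := by
  unfold walk
  congr 2
  exact sum_congr rfl fun j _ => by split_ifs with hj; exacts [by rw [h j hj], rfl]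

lemma walk_update_succ (s : Fin (l + 1) → Fin d × Bool) (j : Fin (l + 1)) (z : Fin d × Bool) :
    walk d l Δx xn (update s j z) (j + 1) = walk d l Δx xn s (j + 1) :=
  walk_congr fun i hi => update_of_ne (by rintro rfl; omega) _ _

variable (d l Δx xn ξ)

noncomputable def transitionProb (lam : ℝ) (j : Fin (l + 1)) (s : Fin (l + 1) → Fin d × Bool) :
    ℝ :=
  stepProb d lam (ξ (walk d l Δx xn s (j + 1)) (j + 1)) (s j)

noncomputable def increment (Δt : ℝ) (i : Fin d) (j : Fin (l + 1))
    (s : Fin (l + 1) → Fin d × Bool) : ℝ :=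
  Δt * ξ (walk d l Δx xn s (j + 1)) (j + 1) i + Δx * stepVec d (s j) i

lemma pathProb_eq_pathWeight (lam : ℝ) :
    pathProb d l Δx lam ξ xn = pathWeight (transitionProb d l Δx xn ξ lam) :=
  rfl

variable {d l Δx xn ξ}

lemma dependsOnTail_transitionProb (lam : ℝ) : DependsOnTail (transitionProb d l Δx xn ξ lam) :=
  fun j s s' h => by
    rw [transitionProb, transitionProb, h j le_rfl,
      walk_congr fun i hi => h i (Fin.le_iff_val_le_val.mpr (by omega))]

lemma dependsOnTail_increment (Δt : ℝ) (i : Fin d) :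
    DependsOnTail (increment d l Δx xn ξ Δt i) :=
  fun j s s' h => by
    rw [increment, increment, h j le_rfl,
      walk_congr fun i hi => h i (Fin.le_iff_val_le_val.mpr (by omega))]

lemma transitionProb_nonneg {lam : ℝ} (hlam : 0 < lam)
    (hξ : ∀ x k i, |ξ x k i| ≤ ((d : ℝ) * lam)⁻¹) (j : Fin (l + 1))
    (s : Fin (l + 1) → Fin d × Bool) :
    0 ≤ transitionProb d l Δx xn ξ lam j s :=
  stepProb_nonneg hlam (hξ _ _) _

lemma sum_transitionProb_update (hd : 0 < d) (lam : ℝ) (j : Fin (l + 1))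
    (s : Fin (l + 1) → Fin d × Bool) :
    ∑ z, transitionProb d l Δx xn ξ lam j (update s j z) = 1 := by
  simp only [transitionProb, walk_update_succ, update_self]
  exact sum_stepProb hd lam _

lemma sum_transitionProb_mul_increment (hd : 0 < d) {lam Δt : ℝ} (hΔt : Δt = lam * Δx)
    (i : Fin d) (j : Fin (l + 1)) (s : Fin (l + 1) → Fin d × Bool) :
    ∑ z, transitionProb d l Δx xn ξ lam j (update s j z) *
      increment d l Δx xn ξ Δt i j (update s j z) = 0 := by
  simp only [transitionProb, increment, walk_update_succ, update_self, hΔt]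
  exact sum_stepProb_mul_increment hd lam Δx _ i

lemma sum_transitionProb_mul_increment_sq_le (hd : 0 < d) {lam Δt : ℝ} (hΔt : Δt = lam * Δx)
    (i : Fin d) (j : Fin (l + 1)) (s : Fin (l + 1) → Fin d × Bool) :
    ∑ z, transitionProb d l Δx xn ξ lam j (update s j z) *
      increment d l Δx xn ξ Δt i j (update s j z) ^ 2 ≤ Δx ^ 2 := by
  simp only [transitionProb, increment, walk_update_succ, update_self, hΔt]
  exact sum_stepProb_mul_increment_sq_le hd lam Δx _ i

lemma etaCurve_sub_walk_apply (Δt : ℝ) (s : Fin (l + 1) → Fin d × Bool) (k : ℕ) (i : Fin d) :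
    (etaCurve d l Δx Δt ξ xn s k - walk d l Δx xn s k) i =
      -∑ j : Fin (l + 1), if k ≤ (j : ℕ) then increment d l Δx xn ξ Δt i j s else 0 := by
  rw [etaCurve, walk]
  simp only [PiLp.sub_apply, PiLp.add_apply, PiLp.smul_apply, smul_eq_mul, WithLp.ofLp_sum,
    Finset.sum_apply, apply_ite (fun v : EuclideanSpace ℝ (Fin d) => v i), PiLp.zero_apply]
  have hsplit : ∑ j : Fin (l + 1), (if k ≤ (j : ℕ) then increment d l Δx xn ξ Δt i j s else 0) =
      Δt * (∑ j : Fin (l + 1), if k ≤ (j : ℕ) then ξ (walk d l Δx xn s (j + 1)) (j + 1) i else 0) +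
        Δx * ∑ j : Fin (l + 1), if k ≤ (j : ℕ) then stepVec d (s j) i else 0 := by
    rw [mul_sum, mul_sum, ← sum_add_distrib]
    exact sum_congr rfl fun j _ => by split_ifs <;> simp [increment]
  rw [hsplit]
  ring

lemma pathProb_nonneg {lam : ℝ} (hlam : 0 < lam)
    (hξ : ∀ x k i, |ξ x k i| ≤ ((d : ℝ) * lam)⁻¹) (s : Fin (l + 1) → Fin d × Bool) :
    0 ≤ pathProb d l Δx lam ξ xn s :=
  prod_nonneg fun j _ => transitionProb_nonneg hlam hξ j s

lemma sum_pathProb (hd : 0 < d) (lam : ℝ) : ∑ s, pathProb d l Δx lam ξ xn s = 1 :=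
  have : Nonempty (Fin d × Bool) := ⟨(⟨0, hd⟩, true)⟩
  sum_pathWeight (dependsOnTail_transitionProb lam) (sum_transitionProb_update hd lam)

lemma sum_pathProb_mul_sq_le (hd : 0 < d) {lam Δt : ℝ} (hlam : 0 < lam) (hΔt : Δt = lam * Δx)
    (hξ : ∀ x k i, |ξ x k i| ≤ ((d : ℝ) * lam)⁻¹) (i : Fin d) {k : ℕ} (hk : k ≤ l + 1) :
    ∑ s, pathProb d l Δx lam ξ xn s *
        (∑ j : Fin (l + 1), if k ≤ (j : ℕ) then increment d l Δx xn ξ Δt i j s else 0) ^ 2 ≤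
      ((l : ℝ) + 1 - k) * Δx ^ 2 := by
  have : Nonempty (Fin d × Bool) := ⟨(⟨0, hd⟩, true)⟩
  have key := sum_pathWeight_mul_sq_le
    (X := fun j s => if k ≤ (j : ℕ) then increment d l Δx xn ξ Δt i j s else 0)
    (C := fun j => if k ≤ (j : ℕ) then Δx ^ 2 else 0)
    (dependsOnTail_transitionProb lam) (transitionProb_nonneg hlam hξ)
    (sum_transitionProb_update hd lam)
    (fun j s s' h => by dsimp only; rw [dependsOnTail_increment Δt i j s s' h])
    (fun j s => by
      split_ifs; exacts [sum_transitionProb_mul_increment hd hΔt i j s, by simp])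
    (fun j s => by
      split_ifs; exacts [sum_transitionProb_mul_increment_sq_le hd hΔt i j s, by simp])
    0
  rw [pathProb_eq_pathWeight, ← sum_ite_le_val_eq_mul hk]
  simpa only [zero_add, zero_pow two_ne_zero] using key

end Path

/-- For every control `ξ` with `‖ξ‖_∞ ≤ (dλ)⁻¹` and every `0 ≤ k ≤ l+1` and
coordinate `i`, the quantities `σ̃^k_i = E[|(η^k(γ)−γ^k)^i|²]` and `δ̃^k_i = E[|(η^k(γ)−γ^k)^i|]`
satisfy `(δ̃^k_i)² ≤ σ̃^k_i ≤ (t_{l+1} − t_k)·Δx/λ`, where `λ = Δt/Δx`, `t_k = kΔt`. -/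
theorem variance_bound (d l : ℕ) (hd : 0 < d) (Δx Δt : ℝ) (hΔx : 0 < Δx) (hΔt : 0 < Δt)
    (lam : ℝ) (hlam : lam = Δt / Δx)
    (ξ : EuclideanSpace ℝ (Fin d) → ℕ → EuclideanSpace ℝ (Fin d))
    (hξ : ∀ x k i, |ξ x k i| ≤ ((d : ℝ) * lam)⁻¹)
    (xn : EuclideanSpace ℝ (Fin d)) :
    ∀ k ≤ l + 1, ∀ i : Fin d,
      (∑ s : Fin (l + 1) → Fin d × Bool, pathProb d l Δx lam ξ xn s *
          |(etaCurve d l Δx Δt ξ xn s k - walk d l Δx xn s k) i|) ^ 2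
        ≤ ∑ s : Fin (l + 1) → Fin d × Bool, pathProb d l Δx lam ξ xn s *
            |(etaCurve d l Δx Δt ξ xn s k - walk d l Δx xn s k) i| ^ 2 ∧
      ∑ s : Fin (l + 1) → Fin d × Bool, pathProb d l Δx lam ξ xn s *
          |(etaCurve d l Δx Δt ξ xn s k - walk d l Δx xn s k) i| ^ 2
        ≤ (((l : ℝ) + 1) * Δt - (k : ℝ) * Δt) * (Δx / lam) := by
  intro k hk i
  have hlam_pos : 0 < lam := hlam ▸ div_pos hΔt hΔx
  have hΔt_eq : Δt = lam * Δx := by rw [hlam, div_mul_cancel₀ _ hΔx.ne']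
  refine ⟨sq_sum_mul_le_sum_mul_sq _ (fun s _ => pathProb_nonneg hlam_pos hξ s)
    (sum_pathProb hd lam), ?_⟩
  calc _ = ∑ s, pathProb d l Δx lam ξ xn s *
          (∑ j : Fin (l + 1), if k ≤ (j : ℕ) then increment d l Δx xn ξ Δt i j s else 0) ^ 2 := by
        simp only [etaCurve_sub_walk_apply, abs_neg, sq_abs]
    _ ≤ ((l : ℝ) + 1 - k) * Δx ^ 2 := sum_pathProb_mul_sq_le hd hlam_pos hΔt_eq hξ i hk
    _ = (((l : ℝ) + 1) * Δt - (k : ℝ) * Δt) * (Δx / lam) := by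
        rw [hΔt_eq]
        field_simp

end RandomWalkVariance
end

section
/- Let f : [0,t] → ℝ be Lipschitz with Lipschitz constant θ and f(t) = 0. Then sup_{s∈[0,t]} |f(s)| ≤ θ · ‖f‖_{L²([0,t])} + √(‖f‖_{L²([0,t])}), where ‖f‖_{L²} = (∫₀ᵗ f(s)² ds)^{1/2}. -/
/-- If `f : [0,t] → ℝ` is Lipschitz with constant `θ` and `f(t) = 0`, then
`sup_{s∈[0,t]} |f(s)| ≤ θ‖f‖_{L²([0,t])} + √(‖f‖_{L²([0,t])})`. -/
theorem sup_le_of_lipschitz_l2 (t θ : ℝ) (ht : 0 < t) (hθ : 0 ≤ θ) (f : ℝ → ℝ)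
    (hf : ∀ a ∈ Set.Icc (0 : ℝ) t, ∀ b ∈ Set.Icc (0 : ℝ) t, |f a - f b| ≤ θ * |a - b|)
    (hft : f t = 0) :
    ∀ s ∈ Set.Icc (0 : ℝ) t,
      |f s| ≤ θ * Real.sqrt (∫ x in (0 : ℝ)..t, (f x) ^ 2)
        + Real.sqrt (Real.sqrt (∫ x in (0 : ℝ)..t, (f x) ^ 2)) := by
  intro s hs
  set I := ∫ x in (0 : ℝ)..t, (f x) ^ 2 with hIdef
  -- continuity of f on [0,t]
  have hcont : ContinuousOn f (Set.Icc 0 t) := by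
    have hlip : LipschitzOnWith (Real.toNNReal θ) f (Set.Icc 0 t) :=
      LipschitzOnWith.of_dist_le_mul (fun a ha b hb => by
        rw [Real.dist_eq, Real.dist_eq, Real.coe_toNNReal θ hθ]
        exact hf a ha b hb)
    exact hlip.continuousOn
  have hcont2 : ContinuousOn (fun x => (f x) ^ 2) (Set.Icc 0 t) :=
    hcont.pow 2
  have hint : IntervalIntegrable (fun x => (f x) ^ 2) MeasureTheory.volume 0 t :=
    hcont2.intervalIntegrable_of_Icc ht.le
  have hI0 : 0 ≤ I :=
    intervalIntegral.integral_nonneg ht.le (fun x _ => sq_nonneg _)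
  set L := Real.sqrt I with hLdef
  have hL0 : 0 ≤ L := Real.sqrt_nonneg _
  -- key inequality
  have key : ∀ δ : ℝ, 0 < δ → δ ≤ t → |f s| ≤ θ * δ + L / Real.sqrt δ := by
    intro δ hδ0 hδt
    have hsqδ : 0 < Real.sqrt δ := Real.sqrt_pos.mpr hδ0
    by_cases hM : |f s| ≤ θ * δ
    · have : 0 ≤ L / Real.sqrt δ := div_nonneg hL0 hsqδ.le
      linarith
    push_neg at hM
    set c := |f s| - θ * δ with hcdef
    have hc0 : 0 < c := sub_pos.mpr hM
    set a := min s (t - δ) with hadef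
    have ha0 : 0 ≤ a := le_min hs.1 (by linarith)
    have haδ : a + δ ≤ t := by
      have : a ≤ t - δ := min_le_right _ _
      linarith
    have hsa : a ≤ s := min_le_left _ _
    have hsb : s ≤ a + δ := by
      rcases le_total s (t - δ) with h | h
      · have : a = s := min_eq_left h
        linarith
      · have : a = t - δ := min_eq_right h
        rw [this]
        linarith [hs.2]
    have hlow : ∀ x ∈ Set.Icc a (a + δ), c ^ 2 ≤ (f x) ^ 2 := by
      intro x hx
      have hxI : x ∈ Set.Icc (0 : ℝ) t := ⟨le_trans ha0 hx.1, le_trans hx.2 haδ⟩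
      have hxs : |x - s| ≤ δ := by
        rw [abs_le]
        constructor <;> [linarith [hx.1]; linarith [hx.2]]
      have h1 : |f s - f x| ≤ θ * δ := by
        have := hf s hs x hxI
        have h2 : |s - x| = |x - s| := abs_sub_comm s x
        calc |f s - f x| ≤ θ * |s - x| := this
          _ = θ * |x - s| := by rw [h2]
          _ ≤ θ * δ := by nlinarith
      have h2 : c ≤ |f x| := by
        have := abs_sub_abs_le_abs_sub (f s) (f x)
        calc c = |f s| - θ * δ := rfl
          _ ≤ |f s| - |f s - f x| := by linarith
          _ ≤ |f x| := by linarith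
      calc c ^ 2 ≤ |f x| ^ 2 := by nlinarith
        _ = (f x) ^ 2 := sq_abs _
    have hintab : IntervalIntegrable (fun x => (f x) ^ 2) MeasureTheory.volume a (a + δ) := by
      apply (hcont2.mono _).intervalIntegrable_of_Icc (by linarith)
      exact Set.Icc_subset_Icc ha0 haδ
    have h1 : δ * c ^ 2 ≤ ∫ x in a..(a + δ), (f x) ^ 2 := by
      have := intervalIntegral.integral_mono_on (by linarith : a ≤ a + δ)
        (intervalIntegrable_const) hintab hlow
      simpa using this
    have h2 : (∫ x in a..(a + δ), (f x) ^ 2) ≤ I := by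
      apply intervalIntegral.integral_mono_interval ha0 (by linarith : a ≤ a + δ) haδ
      · filter_upwards with x
        simpa using sq_nonneg (f x)
      · exact hint
    have h3 : δ * c ^ 2 ≤ I := h1.trans h2
    have h4 : Real.sqrt δ * c ≤ L := by
      have : Real.sqrt δ * c = Real.sqrt (δ * c ^ 2) := by
        rw [Real.sqrt_mul hδ0.le, Real.sqrt_sq hc0.le]
      rw [this]
      exact Real.sqrt_le_sqrt h3
    have h5 : c ≤ L / Real.sqrt δ := by
      rw [le_div_iff₀ hsqδ]
      linarith [h4, mul_comm (Real.sqrt δ) c]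
    linarith [h5]
  -- combine
  by_cases hL : L = 0
  · have h0 : |f s| ≤ 0 := by
      apply le_of_forall_pos_le_add
      intro ε hε
      set δ := min t (ε / (θ + 1)) with hδdef
      have hδ0 : 0 < δ := lt_min ht (by positivity)
      have hk := key δ hδ0 (min_le_left _ _)
      rw [hL, zero_div, add_zero] at hk
      have hδle : δ ≤ ε / (θ + 1) := min_le_right _ _
      have h3 : θ * δ ≤ θ * (ε / (θ + 1)) := by nlinarith
      have h4 : θ * (ε / (θ + 1)) ≤ ε := by
        rw [← mul_div_assoc, div_le_iff₀ (by positivity)]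
        nlinarith
      linarith
    rw [hL]
    simp only [mul_zero, Real.sqrt_zero, add_zero]
    linarith [abs_nonneg (f s)]
  · have hLpos : 0 < L := lt_of_le_of_ne hL0 (Ne.symm hL)
    rcases le_total L t with hLt | hLt
    · have hk := key L hLpos hLt
      have hdiv : L / Real.sqrt L = Real.sqrt L := by
        rw [eq_comm, eq_div_iff (ne_of_gt (Real.sqrt_pos.mpr hLpos)),
          Real.mul_self_sqrt hL0]
      rw [hdiv] at hk
      exact hk
    · have h1 : |f s| ≤ θ * t := by
        have := hf s hs t ⟨ht.le, le_refl t⟩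
        rw [hft, sub_zero] at this
        have h2 : |s - t| = t - s := by
          rw [abs_sub_comm, abs_of_nonneg (by linarith [hs.2])]
        rw [h2] at this
        nlinarith [hs.1]
      have h2 : θ * t ≤ θ * L := by nlinarith
      have h3 : 0 ≤ Real.sqrt L := Real.sqrt_nonneg _
      linarith
end
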